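/- Let n ≥ 1 and k > n+1 be integers, d ∈ ℝ, and F_n := (y + d x^{n+1}, (n+1)x^{2n+1} + (n+1)d x^n y). Let either f = y − x^{n+1} with cofactor K = (n+1)(d−1)x^n, or f = y + x^{n+1} with cofactor K = (n+1)(d+1)x^n. If |d| ≠ 1 + 2(n+1)/(k−n−1), then for any a ∈ ℝ, if f divides the polynomial ∇(a x^k)·(F_n − (1/k)·K·D₀) in ℝ[x,y], then a = 0. -/
import Mathlib


open MvPolynomial

/-- `∇f · (P,Q)` for a planar polynomial vector field `(P,Q)`. -/
noncomputable def gradDot (f P Q : MvPolynomial (Fin 2) ℝ) : MvPolynomial (Fin 2) ℝ :=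
  pderiv 0 f * P + pderiv 1 f * Q

lemma corange_transversality_aux (n k : ℕ) (hn : 1 ≤ n) (hk : n + 1 < k) (d e a : ℝ)
    (he : e = 1 ∨ e = -1)
    (hd : |d| ≠ 1 + 2 * ((n : ℝ) + 1) / ((k : ℝ) - (n : ℝ) - 1))
    (hdvd : (X 1 - C e * X 0 ^ (n+1) : MvPolynomial (Fin 2) ℝ) ∣
      gradDot (C a * X 0 ^ k)
        (X 1 + C d * X 0 ^ (n + 1) - C (1 / (k : ℝ)) * (C (((n:ℝ)+1)*(d-e)) * X 0 ^ n) * X 0)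
        (C ((n : ℝ) + 1) * X 0 ^ (2 * n + 1) + C (((n : ℝ) + 1) * d) * X 0 ^ n * X 1
          - C (1 / (k : ℝ)) * (C (((n:ℝ)+1)*(d-e)) * X 0 ^ n) * (C ((n : ℝ) + 1) * X 1))) :
    a = 0 := by
  obtain ⟨q, hq⟩ := hdvd
  have h0 := congrArg (eval (![1, e] : Fin 2 → ℝ)) hq
  simp [gradDot, pderiv_C_mul, pderiv_pow, pderiv_mul] at h0
  rcases h0 with (h | h) | h
  · exact h
  · omega
  · exfalso
    apply hd
    have hkR : ((n:ℝ) + 1) < (k:ℝ) := by exact_mod_cast hk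
    have hnR : (0:ℝ) ≤ (n:ℝ) := Nat.cast_nonneg n
    have hpos : (0:ℝ) < (k:ℝ) - (n:ℝ) - 1 := by linarith
    have hkne : (k:ℝ) ≠ 0 := by linarith
    have hEq : d * ((k:ℝ) - (n:ℝ) - 1) = -e * ((k:ℝ) + (n:ℝ) + 1) := by
      have h' : (k:ℝ) * (e + d - ((k:ℝ))⁻¹ * (((n:ℝ) + 1) * (d - e))) = 0 := by
        rw [h]; ring
      field_simp at h'
      nlinarith [h']
    have hrhs : 1 + 2 * ((n:ℝ)+1) / ((k:ℝ) - (n:ℝ) - 1)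
        = ((k:ℝ) + (n:ℝ) + 1) / ((k:ℝ) - (n:ℝ) - 1) := by
      field_simp; ring
    rcases he with rfl | rfl
    · have hdval : d = -(((k:ℝ)+(n:ℝ)+1)/((k:ℝ)-(n:ℝ)-1)) := by
        field_simp
        linarith [hEq]
      rw [hdval, abs_neg, abs_of_pos (by positivity), hrhs]
    · have hdval : d = ((k:ℝ)+(n:ℝ)+1)/((k:ℝ)-(n:ℝ)-1) := by
        field_simp
        linarith [hEq]
      rw [hdval, abs_of_pos (by positivity), hrhs]

/-- If `|d| ≠ 1 + 2(n+1)/(k−n−1)`, then for `f = y ∓ x^{n+1}` (with its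
cofactor `K = (n+1)(d∓1)x^n`), the only multiple `a·x^k` of `x^k` such that
`f` divides `∇(a x^k)·(F_n − (1/k)K·D₀)` is `a = 0`. -/
theorem corange_transversality
    (n k : ℕ) (hn : 1 ≤ n) (hk : n + 1 < k) (d : ℝ)
    (f K : MvPolynomial (Fin 2) ℝ)
    (hfK : (f = X 1 - X 0 ^ (n + 1) ∧ K = C (((n : ℝ) + 1) * (d - 1)) * X 0 ^ n) ∨
           (f = X 1 + X 0 ^ (n + 1) ∧ K = C (((n : ℝ) + 1) * (d + 1)) * X 0 ^ n))
    (hd : |d| ≠ 1 + 2 * ((n : ℝ) + 1) / ((k : ℝ) - (n : ℝ) - 1)) :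
    ∀ a : ℝ,
      f ∣ gradDot (C a * X 0 ^ k)
        (X 1 + C d * X 0 ^ (n + 1) - C (1 / (k : ℝ)) * K * X 0)
        (C ((n : ℝ) + 1) * X 0 ^ (2 * n + 1) + C (((n : ℝ) + 1) * d) * X 0 ^ n * X 1
          - C (1 / (k : ℝ)) * K * (C ((n : ℝ) + 1) * X 1)) →
      a = 0 := by
  intro a hdvd
  rcases hfK with ⟨hf, hK⟩ | ⟨hf, hK⟩
  · refine corange_transversality_aux n k hn hk d 1 a (Or.inl rfl) hd ?_
    rw [hf, hK] at hdvd
    simpa using hdvd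
  · refine corange_transversality_aux n k hn hk d (-1) a (Or.inr rfl) hd ?_
    rw [hf, hK] at hdvd
    simpa [sub_neg_eq_add] using hdvd
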